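/- arXiv:1312.1085 — 3 statements merged into one kernel-verified Lean document; each statement's English description precedes it below -/
import Mathlib

section
/- Let P be an n×n real orthogonal projection matrix and Q a symmetric positive semidefinite matrix with P + Q ≼ I. Suppose w ∈ ℂⁿ is a nonzero vector and θ ∈ (0, 2π) satisfy (I - P - Q)(I - 2P) w = e^{iθ} w. Then a contradiction follows; i.e., e^{iθ} with θ ∈ (0,2π) is never an eigenvalue of R = (I - P - Q)(I - 2P). In particular the only eigenvalue of R of modulus 1 that can occur is 1 itself. -/
open Matrix ComplexOrder
open scoped MatrixOrder

/-!
Put `A = I - P - Q` and `v = (I - 2P) w`. The reflection `I - 2P` is a self-adjoint involution,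
so `‖A v‖ = ‖R w‖ = ‖w‖ = ‖v‖`. As `0 ≤ A ≤ I`, the commuting product `A (I - A)` is positive,
so `‖v‖² = ⟪v, A² v⟫ ≤ ⟪v, A v⟫`, i.e. `⟪v, (P + Q) v⟫ ≤ 0`. Hence `(P + Q) v = 0`, so `P v = 0`,
so `v` is fixed by the reflection: `v = w`, and `R w = A v = v = w`. Thus `e^{iθ} = 1`.
-/

theorem IsIdempotentElem.one_sub_two_mul_mul_self {R : Type*} [Ring R] {p : R}
    (hp : IsIdempotentElem p) : (1 - 2 * p) * (1 - 2 * p) = 1 := by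
  calc (1 - 2 * p) * (1 - 2 * p) = 1 - 4 * p + 4 * (p * p) := by noncomm_ring
    _ = 1 := by rw [hp.eq]; abel

namespace Matrix

variable {𝕜 n : Type*} [RCLike 𝕜] [Fintype n]

lemma star_mulVec_dotProduct_mulVec (A : Matrix n n 𝕜) (v : n → 𝕜) :
    star (A *ᵥ v) ⬝ᵥ A *ᵥ v = star v ⬝ᵥ (Aᴴ * A) *ᵥ v := by
  rw [star_mulVec, ← dotProduct_mulVec, mulVec_mulVec]

lemma PosSemidef.mulVec_eq_zero_of_add_mulVec_eq_zero {P Q : Matrix n n 𝕜} (hP : P.PosSemidef)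
    (hQ : Q.PosSemidef) {v : n → 𝕜} (h : (P + Q) *ᵥ v = 0) : P *ᵥ v = 0 := by
  refine (hP.dotProduct_mulVec_zero_iff v).mp (le_antisymm ?_ (hP.dotProduct_mulVec_nonneg v))
  have hsum : star v ⬝ᵥ P *ᵥ v + star v ⬝ᵥ Q *ᵥ v = 0 := by
    rw [← dotProduct_add, ← add_mulVec, h, dotProduct_zero]
  rw [eq_neg_of_add_eq_zero_left hsum, neg_nonpos]
  exact hQ.dotProduct_mulVec_nonneg v

lemma _root_.IsStarProjection.map_algebraMap {P : Matrix n n ℝ} (hP : IsStarProjection P) :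
    IsStarProjection (P.map (algebraMap ℝ 𝕜)) where
  isIdempotentElem := by
    rw [IsIdempotentElem, ← Matrix.map_mul, hP.isIdempotentElem.eq]
  isSelfAdjoint := by
    rw [IsSelfAdjoint, star_eq_conjTranspose,
      ← conjTranspose_map _ fun r => (RCLike.conj_ofReal r).symm, ← star_eq_conjTranspose,
      hP.isSelfAdjoint.star_eq]

variable [DecidableEq n]

lemma PosSemidef.map_algebraMap {M : Matrix n n ℝ} (hM : M.PosSemidef) :
    (M.map (algebraMap ℝ 𝕜)).PosSemidef := by
  obtain ⟨B, rfl⟩ : ∃ B : Matrix n n ℝ, M = Bᴴ * B :=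
    CStarAlgebra.nonneg_iff_eq_star_mul_self.mp hM.nonneg
  rw [Matrix.map_mul, conjTranspose_map _ fun r => (RCLike.conj_ofReal r).symm]
  exact posSemidef_conjTranspose_mul_self _

lemma mulVec_eq_self_of_nonneg_of_le_one {A : Matrix n n 𝕜} (h0 : 0 ≤ A) (h1 : A ≤ 1)
    {v : n → 𝕜} (hv : star (A *ᵥ v) ⬝ᵥ A *ᵥ v = star v ⬝ᵥ v) : A *ᵥ v = v := by
  have hT : (1 - A).PosSemidef := (sub_nonneg.2 h1).posSemidef
  have hAT : (A * (1 - A)).PosSemidef :=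
    (Commute.mul_nonneg h0 (sub_nonneg.2 h1) ((Commute.one_right A).sub_right (.refl A))).posSemidef
  rw [star_mulVec_dotProduct_mulVec, h0.posSemidef.isHermitian.eq] at hv
  have hform : star v ⬝ᵥ (A * (1 - A)) *ᵥ v = -(star v ⬝ᵥ (1 - A) *ᵥ v) := by
    rw [mul_sub, mul_one, sub_mulVec, sub_mulVec, dotProduct_sub, dotProduct_sub, hv, one_mulVec,
      neg_sub]
  have hzero : star v ⬝ᵥ (1 - A) *ᵥ v = 0 :=
    le_antisymm (neg_nonneg.mp (hform ▸ hAT.dotProduct_mulVec_nonneg v))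
      (hT.dotProduct_mulVec_nonneg v)
  have hfix := (hT.dotProduct_mulVec_zero_iff v).mp hzero
  rwa [sub_mulVec, one_mulVec, sub_eq_zero, eq_comm] at hfix

def admmIteration (P Q : Matrix n n 𝕜) : Matrix n n 𝕜 := (1 - P - Q) * (1 - 2 * P)

lemma admmIteration_mulVec_eq_self {P Q : Matrix n n 𝕜} (hP : IsStarProjection P)
    (hQ : Q.PosSemidef) (hPQ : (1 - P - Q).PosSemidef) {w : n → 𝕜}
    (hw : star (admmIteration P Q *ᵥ w) ⬝ᵥ admmIteration P Q *ᵥ w = star w ⬝ᵥ w) :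
    admmIteration P Q *ᵥ w = w := by
  have hBB := hP.isIdempotentElem.one_sub_two_mul_mul_self
  have hBH : (1 - 2 * P)ᴴ = 1 - 2 * P := by
    simp [← star_eq_conjTranspose, hP.isSelfAdjoint.star_eq, (Commute.ofNat_right P 2).eq]
  set v := (1 - 2 * P) *ᵥ w
  have hvw : (1 - 2 * P) *ᵥ v = w := by rw [mulVec_mulVec, hBB, one_mulVec]
  have hv : star v ⬝ᵥ v = star w ⬝ᵥ w := by
    rw [star_mulVec_dotProduct_mulVec, hBH, hBB, one_mulVec]
  have hle : 1 - P - Q ≤ 1 := by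
    rw [le_iff, show (1 : Matrix n n 𝕜) - (1 - P - Q) = P + Q by abel]
    exact hP.nonneg.posSemidef.add hQ
  have hAv : (1 - P - Q) *ᵥ v = v :=
    mulVec_eq_self_of_nonneg_of_le_one hPQ.nonneg hle (by rw [hv, mulVec_mulVec]; exact hw)
  have hPv : P *ᵥ v = 0 := by
    refine hP.nonneg.posSemidef.mulVec_eq_zero_of_add_mulVec_eq_zero hQ ?_
    rw [show P + Q = 1 - (1 - P - Q) by abel, sub_mulVec, one_mulVec, hAv, sub_self]
  have hBv : (1 - 2 * P) *ᵥ v = v := by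
    rw [sub_mulVec, one_mulVec, ← mulVec_mulVec, hPv, mulVec_zero, sub_zero]
  calc admmIteration P Q *ᵥ w = (1 - P - Q) *ᵥ v := (mulVec_mulVec _ _ _).symm
    _ = w := by rw [hAv, ← hBv, hvw]

end Matrix

lemma Complex.exp_ofReal_mul_I_ne_one {θ : ℝ} (hθ0 : 0 < θ) (hθ2 : θ < 2 * Real.pi) :
    Complex.exp (θ * Complex.I) ≠ 1 := by
  intro h
  have := Circle.exp_injOn_Ico (by simp) ⟨hθ0.le, hθ2⟩ ⟨le_rfl, Real.two_pi_pos⟩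
    (Circle.ext (by simpa using h))
  linarith

/-- If `P` is a real orthogonal projection matrix, `Q` symmetric PSD with `P + Q ≼ I`,
then `R = (I - P - Q)(I - 2P)` has no complex eigenvalue `e^{iθ}` with `θ ∈ (0, 2π)`:
the only possible eigenvalue of modulus one is `1` itself. -/
theorem admm_R_no_unit_eigenvalue {n : ℕ} (P Q : Matrix (Fin n) (Fin n) ℝ)
    (hPproj : P * P = P) (hPsym : Pᵀ = P)
    (hQ : Q.PosSemidef)
    (hPQI : (1 - P - Q).PosSemidef)
    (θ : ℝ) (hθ0 : 0 < θ) (hθ2 : θ < 2 * Real.pi)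
    (w : Fin n → ℂ) (hw : w ≠ 0)
    (heig : (((1 - P - Q) * (1 - (2:ℝ) • P)).map (algebraMap ℝ ℂ)).mulVec w
      = Complex.exp (θ * Complex.I) • w) : False := by
  set c := Complex.exp (θ * Complex.I)
  have hP : IsStarProjection P :=
    ⟨hPproj, by rw [IsSelfAdjoint, star_eq_conjTranspose, conjTranspose_eq_transpose_of_trivial,
      hPsym]⟩
  have hPQ : (1 - P - Q).map (algebraMap ℝ ℂ) =
      1 - P.map (algebraMap ℝ ℂ) - Q.map (algebraMap ℝ ℂ) := by
    simp only [← RingHom.mapMatrix_apply, map_sub, map_one]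
  have hR : ((1 - P - Q) * (1 - (2:ℝ) • P)).map (algebraMap ℝ ℂ) =
      admmIteration (P.map (algebraMap ℝ ℂ)) (Q.map (algebraMap ℝ ℂ)) := by
    simp only [admmIteration, two_smul, two_mul, ← RingHom.mapMatrix_apply, map_mul, map_sub,
      map_one, map_add]
  have hc : star c * c = 1 := by
    rw [RCLike.star_def, Complex.conj_mul', Complex.norm_exp_ofReal_mul_I]
    simp
  rw [hR] at heig
  have hfix := admmIteration_mulVec_eq_self hP.map_algebraMap hQ.map_algebraMap
    (hPQ ▸ hPQI.map_algebraMap)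
    (by rw [heig, star_smul, smul_dotProduct, dotProduct_smul, smul_smul, hc, one_smul])
  rw [heig] at hfix
  exact Complex.exp_ofReal_mul_I_ne_one hθ0 hθ2
    (smul_left_injective ℂ hw (hfix.trans (one_smul ℂ w).symm))
end

section
/- Let P be an n×n real orthogonal projection matrix and Q a symmetric positive semidefinite matrix with P + Q ≼ I, and set R = (I - P - Q)(I - 2P). Then for every eigenvalue λ of R, rank((R - λI)²) = rank(R - λI); equivalently every Jordan block of R is of size 1 (R is diagonalizable over ℂ). -/
open Matrix ComplexOrder

/-!
If `P` is idempotent and `0 ≤ Q ≤ 1 - P`, then for `y = P x` the form `y⋆ (1 - P - Q) y`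
equals `-(y⋆ Q y)`, so `y⋆ Q y = 0` and hence `Q P = 0`. Therefore `(1 - P - Q) P = 0` and
`R = (1 - P - Q)(1 - 2P) = 1 - P - Q` is symmetric. Over `ℂ`, `A = R - μ` is then normal, so
`(A²)ᴴ A² = (Aᴴ A)ᴴ (Aᴴ A)`, and `rank (Bᴴ B) = rank B` gives
`rank A² = rank (Aᴴ A) = rank A`.
-/

theorem IsSelfAdjoint.isStarNormal_sub_smul_one {R A : Type*} [Ring A] [StarRing A] [Star R]
    [SMul R A] [StarModule R A] [SMulCommClass R A A] [IsScalarTower R A A] {a : A}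
    (ha : IsSelfAdjoint a) (μ : R) : IsStarNormal (a - μ • 1) :=
  have := ha.isStarNormal
  Commute.isStarNormal_sub <| by
    rw [star_smul, star_one]
    exact (Commute.one_right a).smul_right _

namespace Matrix

variable {n 𝕜 : Type*} [Fintype n]

theorem rank_sq_of_isStarNormal [DecidableEq n] [Field 𝕜] [PartialOrder 𝕜] [StarRing 𝕜]
    [StarOrderedRing 𝕜] (A : Matrix n n 𝕜) [hA : IsStarNormal A] : (A ^ 2).rank = A.rank := by
  have hsq : (A ^ 2)ᴴ * A ^ 2 = (Aᴴ * A)ᴴ * (Aᴴ * A) := by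
    have hcomm : Aᴴ * A = A * Aᴴ := hA.star_comm_self
    simp only [sq, conjTranspose_mul, conjTranspose_conjTranspose, mul_assoc]
    rw [← mul_assoc A, ← hcomm, mul_assoc]
  rw [← rank_conjTranspose_mul_self (A ^ 2), hsq, rank_conjTranspose_mul_self,
    rank_conjTranspose_mul_self]

theorem PosSemidef.mul_eq_zero_of_posSemidef_one_sub_sub [DecidableEq n] [RCLike 𝕜]
    {P Q : Matrix n n 𝕜} (hP : IsIdempotentElem P) (hQ : Q.PosSemidef)
    (hPQ : (1 - P - Q).PosSemidef) : Q * P = 0 := by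
  refine ext_iff_mulVec.mpr fun x ↦ ?_
  rw [← mulVec_mulVec, zero_mulVec]
  set y := P *ᵥ x
  have hPy : P *ᵥ y = y := by rw [mulVec_mulVec, hP.eq]
  have hform : star y ⬝ᵥ (1 - P - Q) *ᵥ y = -(star y ⬝ᵥ Q *ᵥ y) := by
    rw [sub_mulVec, sub_mulVec, one_mulVec, hPy, dotProduct_sub, dotProduct_sub, sub_self,
      zero_sub]
  have hzero : star y ⬝ᵥ Q *ᵥ y = 0 :=
    le_antisymm (neg_nonneg.mp (hform ▸ hPQ.dotProduct_mulVec_nonneg y))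
      (hQ.dotProduct_mulVec_nonneg y)
  exact (hQ.dotProduct_mulVec_zero_iff y).mp hzero

end Matrix

theorem admm_R_trivial_jordan_blocks_general {n : ℕ} (P Q : Matrix (Fin n) (Fin n) ℝ)
    (hPproj : P * P = P)
    (hQ : Q.PosSemidef)
    (hPQI : (1 - P - Q).PosSemidef)
    (μ : ℂ) :
    (((((1 - P - Q) * (1 - (2:ℝ) • P)).map (algebraMap ℝ ℂ)) - μ • 1) ^ 2).rank
      = ((((1 - P - Q) * (1 - (2:ℝ) • P)).map (algebraMap ℝ ℂ)) - μ • 1).rank := by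
  have hQP : Q * P = 0 := hQ.mul_eq_zero_of_posSemidef_one_sub_sub hPproj hPQI
  have hR : (1 - P - Q) * (1 - (2:ℝ) • P) = 1 - P - Q := by
    have hkill : (1 - P - Q) * P = 0 := by
      rw [sub_mul, sub_mul, one_mul, hPproj, hQP, sub_self, sub_zero]
    rw [mul_sub, mul_one, mul_smul_comm, hkill, smul_zero, sub_zero]
  have hself : IsSelfAdjoint ((1 - P - Q).map (algebraMap ℝ ℂ)) :=
    hPQI.isHermitian.map _ fun _ ↦ by simp
  have := hself.isStarNormal_sub_smul_one μ
  rw [hR]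
  exact rank_sq_of_isStarNormal _

/-- If `P` is a real orthogonal projection matrix, `Q` symmetric PSD with `P + Q ≼ I`,
then for every (complex) eigenvalue `μ` of `R = (I - P - Q)(I - 2P)` one has
`rank((R - μI)²) = rank(R - μI)`: every Jordan block of `R` is trivial, i.e. `R` is
diagonalizable over `ℂ`. -/
theorem admm_R_trivial_jordan_blocks {n : ℕ} (P Q : Matrix (Fin n) (Fin n) ℝ)
    (hPproj : P * P = P) (hPsym : Pᵀ = P)
    (hQ : Q.PosSemidef)
    (hPQI : (1 - P - Q).PosSemidef)
    (μ : ℂ)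
    (heig : ((((1 - P - Q) * (1 - (2:ℝ) • P)).map (algebraMap ℝ ℂ)) - μ • 1).det = 0) :
    (((((1 - P - Q) * (1 - (2:ℝ) • P)).map (algebraMap ℝ ℂ)) - μ • 1) ^ 2).rank
      = ((((1 - P - Q) * (1 - (2:ℝ) • P)).map (algebraMap ℝ ℂ)) - μ • 1).rank :=
  admm_R_trivial_jordan_blocks_general P Q hPproj hQ hPQI μ
end

section
/- Let σ² > 0, ρ > 0, a = ρ/(σ² + 2ρ), and for k ∈ {0,…,N-1} let s_k = (σ² + 2ρ(1 + cos(2πk/N)))/(σ² + 2ρ) and D_k = a(1 + cos(2πk/N)). Then the two roots λ of λ² - s_k λ + D_k = 0 satisfy: if s_k² ≥ 4D_k both roots are real and lie in [0, 1], and if s_k² < 4D_k the roots are complex conjugates with common modulus √D_k < 1. In all cases every root has modulus at most max( (s_k + √(max(s_k²-4D_k,0)))/2 , √D_k ) < 1 provided cos(2πk/N) < 1. -/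
/-!
Writing `z = x + iy`, the equation `z² - s z + D = 0` splits into
`x² - y² - s x + D = 0` and `y (2x - s) = 0`. If `s² ≥ 4D` the root is real, and it lies
in `[0, 1)` because `p(t) = t² - s t + D` is positive at `t < 0` and at `t ≥ 1`
(as `p(1) = 1 - s + D > 0` and the vertex `s/2` lies left of `1`). If `s² < 4D` then
`x = s/2` and `|z|² = D`. For the ring symbol, `1 - s + D = ρ(1 - cos θ)/(σ² + 2ρ)`, which is
positive exactly when `cos θ < 1`.
-/

namespace QuadraticRoot

variable {z : ℂ} {s D : ℝ}

theorem re_eq (hz : z ^ 2 - s * z + D = 0) : z.re ^ 2 - z.im ^ 2 - s * z.re + D = 0 := by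
  simpa [pow_two] using congrArg Complex.re hz

theorem im_mul_eq (hz : z ^ 2 - s * z + D = 0) : z.im * (2 * z.re - s) = 0 := by
  have := congrArg Complex.im hz
  simp only [pow_two, Complex.add_im, Complex.sub_im, Complex.mul_im, Complex.ofReal_re,
    Complex.ofReal_im, Complex.zero_im] at this
  linarith

theorem im_eq_zero (hz : z ^ 2 - s * z + D = 0) (hdisc : 4 * D ≤ s ^ 2) : z.im = 0 := by
  rcases mul_eq_zero.1 (im_mul_eq hz) with h | h
  · exact h
  · nlinarith [re_eq hz, sq_nonneg z.im]

theorem re_eq_half (hz : z ^ 2 - s * z + D = 0) (hdisc : s ^ 2 < 4 * D) : z.re = s / 2 := by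
  rcases mul_eq_zero.1 (im_mul_eq hz) with h | h
  · have := re_eq hz
    rw [h] at this
    nlinarith [sq_nonneg (2 * z.re - s)]
  · linarith

theorem norm_eq_sqrt (hz : z ^ 2 - s * z + D = 0) (hdisc : s ^ 2 < 4 * D) : ‖z‖ = √D := by
  have h := re_eq hz
  rw [re_eq_half hz hdisc] at h
  rw [Complex.norm_def, Complex.normSq_apply, re_eq_half hz hdisc]
  congr 1
  linarith

theorem re_nonneg (hz : z ^ 2 - s * z + D = 0) (hdisc : 4 * D ≤ s ^ 2) (hs : 0 ≤ s)
    (hD : 0 ≤ D) : 0 ≤ z.re := by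
  have h := re_eq hz
  rw [im_eq_zero hz hdisc] at h
  nlinarith [sq_nonneg z.re]

theorem re_lt_one (hz : z ^ 2 - s * z + D = 0) (hdisc : 4 * D ≤ s ^ 2) (hs : s < 2)
    (hone : 0 < 1 - s + D) : z.re < 1 := by
  have h := re_eq hz
  rw [im_eq_zero hz hdisc] at h
  by_contra! hx
  -- `p(x) = p(1) + (x - 1)(x + 1 - s)`
  nlinarith [mul_nonneg (sub_nonneg.2 hx) (by linarith : 0 ≤ z.re + 1 - s)]

theorem norm_lt_one (hz : z ^ 2 - s * z + D = 0) (hs₀ : 0 ≤ s) (hs : s < 2) (hD₀ : 0 ≤ D)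
    (hD : D < 1) (hone : 0 < 1 - s + D) : ‖z‖ < 1 := by
  rcases le_or_gt (4 * D) (s ^ 2) with hdisc | hdisc
  · have hre := re_nonneg hz hdisc hs₀ hD₀
    rw [← Complex.re_add_im z, im_eq_zero hz hdisc, Complex.ofReal_zero, zero_mul, add_zero,
      Complex.norm_real, Real.norm_of_nonneg hre]
    exact re_lt_one hz hdisc hs hone
  · rw [norm_eq_sqrt hz hdisc, Real.sqrt_lt' one_pos]
    linarith

end QuadraticRoot

namespace RingSymbol

variable {σ2 ρ c : ℝ}

theorem trace_nonneg (hσ : 0 ≤ σ2) (hρ : 0 < ρ) (hc : -1 ≤ c) :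
    0 ≤ (σ2 + 2 * ρ * (1 + c)) / (σ2 + 2 * ρ) := by
  apply div_nonneg <;> nlinarith

theorem trace_lt_two (hσ : 0 ≤ σ2) (hρ : 0 < ρ) (hc : c < 1) :
    (σ2 + 2 * ρ * (1 + c)) / (σ2 + 2 * ρ) < 2 := by
  rw [div_lt_iff₀ (by linarith)]
  nlinarith

theorem det_nonneg (hσ : 0 ≤ σ2) (hρ : 0 < ρ) (hc : -1 ≤ c) :
    0 ≤ ρ / (σ2 + 2 * ρ) * (1 + c) := by
  apply mul_nonneg (div_nonneg hρ.le (by linarith)); linarith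

theorem det_lt_one (hσ : 0 ≤ σ2) (hρ : 0 < ρ) (hc : c < 1) :
    ρ / (σ2 + 2 * ρ) * (1 + c) < 1 := by
  rw [div_mul_eq_mul_div, div_lt_one (by linarith)]
  nlinarith

theorem one_sub_trace_add_det_pos (hσ : 0 ≤ σ2) (hρ : 0 < ρ) (hc : c < 1) :
    0 < 1 - (σ2 + 2 * ρ * (1 + c)) / (σ2 + 2 * ρ) + ρ / (σ2 + 2 * ρ) * (1 + c) := by
  have hpos : 0 < σ2 + 2 * ρ := by linarith
  have h : 1 - (σ2 + 2 * ρ * (1 + c)) / (σ2 + 2 * ρ) + ρ / (σ2 + 2 * ρ) * (1 + c)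
      = ρ * (1 - c) / (σ2 + 2 * ρ) := by
    field_simp
    ring
  rw [h]
  exact div_pos (mul_pos hρ (by linarith)) hpos

end RingSymbol

open QuadraticRoot RingSymbol in
theorem ring_symbol_roots_general (N k : ℕ) (σ2 ρ : ℝ) (hσ : 0 < σ2) (hρ : 0 < ρ)
    (hcos : Real.cos (2 * Real.pi * k / N) < 1)
    (s D : ℝ)
    (hs : s = (σ2 + 2 * ρ * (1 + Real.cos (2 * Real.pi * k / N))) / (σ2 + 2 * ρ))
    (hD : D = (ρ / (σ2 + 2 * ρ)) * (1 + Real.cos (2 * Real.pi * k / N)))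
    (lam : ℂ) (hlam : lam ^ 2 - (s : ℂ) * lam + (D : ℂ) = 0) :
    (s ^ 2 ≥ 4 * D → lam.im = 0 ∧ 0 ≤ lam.re ∧ lam.re ≤ 1) ∧
    (s ^ 2 < 4 * D → ‖lam‖ = Real.sqrt D) ∧
    ‖lam‖ < 1 := by
  have hc₀ := Real.neg_one_le_cos (2 * Real.pi * k / N)
  have hs₀ : 0 ≤ s := hs ▸ trace_nonneg hσ.le hρ hc₀
  have hs₂ : s < 2 := hs ▸ trace_lt_two hσ.le hρ hcos
  have hD₀ : 0 ≤ D := hD ▸ det_nonneg hσ.le hρ hc₀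
  have hone : 0 < 1 - s + D := hs ▸ hD ▸ one_sub_trace_add_det_pos hσ.le hρ hcos
  refine ⟨fun hdisc => ⟨im_eq_zero hlam hdisc, re_nonneg hlam hdisc hs₀ hD₀,
    (re_lt_one hlam hdisc hs₂ hone).le⟩, norm_eq_sqrt hlam, ?_⟩
  exact norm_lt_one hlam hs₀ hs₂ hD₀ (hD ▸ det_lt_one hσ.le hρ hcos) hone

/-- Roots of the quadratic `λ² - s_k λ + D_k = 0` arising from the ring-network
block-circulant symbol, with `s_k = (σ² + 2ρ(1+cos(2πk/N)))/(σ² + 2ρ)` and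
`D_k = (ρ/(σ²+2ρ))(1+cos(2πk/N))`: if `s_k² ≥ 4D_k` both roots are real and lie in
`[0,1]`; if `s_k² < 4D_k` they are complex conjugates of modulus `√D_k`; and whenever
`cos(2πk/N) < 1` every root has modulus strictly less than `1`. -/
theorem ring_symbol_roots (N k : ℕ) (hk : k < N) (σ2 ρ : ℝ) (hσ : 0 < σ2) (hρ : 0 < ρ)
    (hcos : Real.cos (2 * Real.pi * k / N) < 1)
    (s D : ℝ)
    (hs : s = (σ2 + 2 * ρ * (1 + Real.cos (2 * Real.pi * k / N))) / (σ2 + 2 * ρ))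
    (hD : D = (ρ / (σ2 + 2 * ρ)) * (1 + Real.cos (2 * Real.pi * k / N)))
    (lam : ℂ) (hlam : lam ^ 2 - (s : ℂ) * lam + (D : ℂ) = 0) :
    (s ^ 2 ≥ 4 * D → lam.im = 0 ∧ 0 ≤ lam.re ∧ lam.re ≤ 1) ∧
    (s ^ 2 < 4 * D → ‖lam‖ = Real.sqrt D) ∧
    ‖lam‖ < 1 :=
  ring_symbol_roots_general N k σ2 ρ hσ hρ hcos s D hs hD lam hlam
end
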